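/- Let 2 ≤ k ≤ n−1, let a ∈ ℚ_pˣ and x₁,…,x_{k−1} ∈ ℚ_p, and let h = I + (a − 1)e_{k,k} + Σ_{i=1}^{k−1} x_i e_{k,i} ∈ GL(n,ℚ_p). Let Y = {u ∈ N_n : u_{j,l} = 0 whenever j < l ≤ k}, a closed subgroup of N_n isomorphic as a p-adic analytic group to a finite product of copies of (ℚ_p,+); equip Y with a Haar measure dy. Let W : GL(n,ℚ_p) → ℂ satisfy W(gj) = ψ_m(j)·W(g) for all j ∈ J_m and all g, and let g₀ ∈ GL(n,ℚ_p) be such that y ↦ W(g₀·h^{−1}·y·h)·ψ(y)^{−1} is integrable on Y. If ∫_Y W(g₀·h^{−1}·y·h)·ψ(y)^{−1} dy ≠ 0, then h ∈ J_m; that is, x_i ∈ p^{(1+2(k−i))m} ℤ_p for every 1 ≤ i ≤ k−1 and a ∈ 1 + p^m ℤ_p. -/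

import Mathlib

/-!
Indices are zero-based, so `h` differs from the identity only in row `κ = k - 1`; hence so does
`h⁻¹`, whose row `κ` has entries `a⁻¹` at `κ` and `-a⁻¹ xᵢ` at `i`. For `r ≤ κ` the element
`u = 1 + t e_{r,k}` lies in `Y`, and `h⁻¹ u h = u + c t e_{κ,k}` with `c = (h⁻¹ - 1)_{κ,r}`.
While this conjugate lies in `N ∩ J_m`, right translation by `u` multiplies the integrand by
`ψ (c t)`, so invariance of the Haar measure and the nonvanishing of the integral force
`ψ (c t) = 1`. Since `ψ` has conductor `ℤ_p`, this bounds `‖c‖` exactly as membership of `h⁻¹` in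
`J_m` demands, and the bounds on `a`, on the `xᵢ` and `h ∈ J_m` follow.
-/
open Matrix MeasureTheory

noncomputable section

/-- The subgroup (as a set) of upper triangular unipotent matrices in `GL n`. -/
def NN (p n : ℕ) [Fact p.Prime] : Set (GL (Fin n) ℚ_[p]) :=
  {g | (∀ i, g.val i i = 1) ∧ ∀ i j : Fin n, j < i → g.val i j = 0}

/-- Lower triangular unipotent matrices in `GL n`. -/
def NNbar (p n : ℕ) [Fact p.Prime] : Set (GL (Fin n) ℚ_[p]) :=
  {g | (∀ i, g.val i i = 1) ∧ ∀ i j : Fin n, i < j → g.val i j = 0}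

/-- Invertible diagonal matrices in `GL n`. -/
def AA (p n : ℕ) [Fact p.Prime] : Set (GL (Fin n) ℚ_[p]) :=
  {g | ∀ i j : Fin n, i ≠ j → g.val i j = 0}

/-- Invertible lower triangular matrices in `GL n`. -/
def BBbar (p n : ℕ) [Fact p.Prime] : Set (GL (Fin n) ℚ_[p]) :=
  {g | ∀ i j : Fin n, i < j → g.val i j = 0}

/-- The congruence subgroup `K_n^m`: matrices `g` with all entries of `g - I` in `p^m ℤ_p`. -/
def Kcong (p n m : ℕ) [Fact p.Prime] : Set (GL (Fin n) ℚ_[p]) :=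
  {g | ∀ i j : Fin n, ‖g.val i j - (1 : Matrix (Fin n) (Fin n) ℚ_[p]) i j‖ ≤ (p : ℝ) ^ (-(m : ℤ))}

/-- The diagonal matrix `d = diag(1, p², p⁴, …, p^{2n-2})` as an element of `GL n`. -/
def dmat (p n : ℕ) [Fact p.Prime] : GL (Fin n) ℚ_[p] :=
  Matrix.GeneralLinearGroup.mkOfDetNeZero
    (Matrix.diagonal fun i : Fin n => (p : ℚ_[p]) ^ (2 * (i : ℕ)))
    (by
      rw [Matrix.det_diagonal]
      exact Finset.prod_ne_zero_iff.mpr fun i _ =>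
        pow_ne_zero _ (Nat.cast_ne_zero.mpr (Fact.out : p.Prime).ne_zero))

/-- The compact open subgroup `J_m = d^m K_n^m d^{-m}`. -/
def Jm (p n m : ℕ) [Fact p.Prime] : Set (GL (Fin n) ℚ_[p]) :=
  {g | ∃ k ∈ Kcong p n m, g = (dmat p n) ^ m * k * ((dmat p n) ^ m)⁻¹}

/-- The sum of the superdiagonal entries `Σ_{i=1}^{n-1} g_{i,i+1}` of a matrix. -/
def superSum {p : ℕ} [Fact p.Prime] {n : ℕ} (g : Matrix (Fin n) (Fin n) ℚ_[p]) : ℚ_[p] :=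
  ∑ i : Fin n, if h : (i : ℕ) + 1 < n then g i ⟨(i : ℕ) + 1, h⟩ else 0

/-- The monoid homomorphism `A ↦ diag(A, 1)` from `n×n` matrices to `(n+1)×(n+1)` matrices. -/
def embedHom (p n : ℕ) [Fact p.Prime] :
    Matrix (Fin n) (Fin n) ℚ_[p] →* Matrix (Fin (n + 1)) (Fin (n + 1)) ℚ_[p] where
  toFun A := (Matrix.reindexAlgEquiv ℚ_[p] ℚ_[p] finSumFinEquiv)
    (Matrix.fromBlocks A 0 0 (1 : Matrix (Fin 1) (Fin 1) ℚ_[p]))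
  map_one' := by
    show (Matrix.reindexAlgEquiv ℚ_[p] ℚ_[p] finSumFinEquiv) _ = 1
    rw [Matrix.fromBlocks_one, _root_.map_one]
  map_mul' A B := by
    show (Matrix.reindexAlgEquiv ℚ_[p] ℚ_[p] finSumFinEquiv) _ =
      (Matrix.reindexAlgEquiv ℚ_[p] ℚ_[p] finSumFinEquiv) _ *
        (Matrix.reindexAlgEquiv ℚ_[p] ℚ_[p] finSumFinEquiv) _
    rw [← _root_.map_mul]
    congr 1
    rw [Matrix.fromBlocks_multiply]
    simp

/-- The embedding `h ↦ diag(h, 1)` of `GL n` into `GL (n+1)`. -/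
def embedGL {p n : ℕ} [Fact p.Prime] (g : GL (Fin n) ℚ_[p]) : GL (Fin (n + 1)) ℚ_[p] :=
  Units.map (embedHom p n) g


variable (p' : ℕ) [Fact p'.Prime]
instance : MeasurableSpace ℚ_[p'] := borel _
instance : BorelSpace ℚ_[p'] := ⟨rfl⟩

/-- Coordinates for the group `Y = {u ∈ N_n : u_{j,l} = 0 for j < l ≤ k}` (one-based), i.e.
the positions `(j,l)` with `j < l` and `l ≥ k+1` (one-based), `k ≤ l` (zero-based). -/
def Yidx (n k : ℕ) : Type :=
  {q : Fin n × Fin n // q.1 < q.2 ∧ k ≤ (q.2 : ℕ)}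

instance (n k : ℕ) : Fintype (Yidx n k) := by unfold Yidx; infer_instance

/-- The element of `Y` with free coordinates `v`. -/
def yMat (p : ℕ) [Fact p.Prime] {n k : ℕ} (v : Yidx n k → ℚ_[p]) :
    Matrix (Fin n) (Fin n) ℚ_[p] :=
  1 + ∑ s : Yidx n k, Matrix.single s.val.1 s.val.2 (v s)

instance (n k : ℕ) : DecidableEq (Yidx n k) := by unfold Yidx; infer_instance

section Character

variable {p : ℕ} [Fact p.Prime] (ψ : AddChar ℚ_[p] ℂ)

/- Modulo `ℤ_p`, every `y` with `‖y‖ ≤ p` is an integer multiple of `p⁻¹`. -/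
theorem psi_inv_p_ne_one (hψtriv : ∀ y : ℚ_[p], ‖y‖ ≤ 1 → ψ y = 1)
    (hψnontriv : ∃ y : ℚ_[p], ‖y‖ ≤ (p : ℝ) ∧ ψ y ≠ 1) : ψ (p : ℚ_[p])⁻¹ ≠ 1 := by
  obtain ⟨y, hy, hψy⟩ := hψnontriv
  have hp : (0 : ℝ) < p := Nat.cast_pos.mpr (Fact.out : p.Prime).pos
  have hpy : ‖(p : ℚ_[p]) * y‖ ≤ 1 := by
    rw [norm_mul, Padic.norm_p, inv_mul_le_one₀ hp]
    exact hy
  obtain ⟨N, -, hN⟩ := PadicInt.exists_mem_range (⟨p * y, hpy⟩ : ℤ_[p])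
  have hN' : ‖(p : ℚ_[p]) * y - N‖ < 1 := PadicInt.mem_nonunits.mp hN
  have hrest : ‖y - N • (p : ℚ_[p])⁻¹‖ ≤ 1 := by
    have hp0 : (p : ℚ_[p]) ≠ 0 := Nat.cast_ne_zero.mpr (Fact.out : p.Prime).ne_zero
    have : y - N • (p : ℚ_[p])⁻¹ = (p : ℚ_[p])⁻¹ * ((p : ℚ_[p]) * y - N) := by
      rw [nsmul_eq_mul]; field_simp
    rw [← zpow_zero (p : ℝ), Padic.norm_le_pow_iff_norm_lt_pow_add_one, this, norm_mul,
      norm_inv, Padic.norm_p, inv_inv, zero_add, zpow_one]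
    calc (p : ℝ) * ‖(p : ℚ_[p]) * y - N‖ < p * 1 := by gcongr
      _ = p := mul_one _
  intro h
  apply hψy
  rw [← add_sub_cancel (N • (p : ℚ_[p])⁻¹) y, AddChar.map_add_eq_mul, AddChar.map_nsmul_eq_pow,
    h, one_pow, one_mul, hψtriv _ hrest]

theorem norm_le_of_forall_psi_mul_eq_one (hψtriv : ∀ y : ℚ_[p], ‖y‖ ≤ 1 → ψ y = 1)
    (hψnontriv : ∃ y : ℚ_[p], ‖y‖ ≤ (p : ℝ) ∧ ψ y ≠ 1) {c : ℚ_[p]} {E : ℤ}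
    (h : ∀ t : ℚ_[p], ‖t‖ ≤ (p : ℝ) ^ E → ‖c * t‖ ≤ p → ψ (c * t) = 1) :
    ‖c‖ ≤ (p : ℝ) ^ (-E) := by
  have hp : (0 : ℝ) < p := Nat.cast_pos.mpr (Fact.out : p.Prime).pos
  have hp0 : (p : ℚ_[p]) ≠ 0 := Nat.cast_ne_zero.mpr (Fact.out : p.Prime).ne_zero
  by_contra hc
  have hcE : (p : ℝ) ^ (-E + 1) ≤ ‖c‖ := by
    rwa [← not_lt, ← Padic.norm_le_pow_iff_norm_lt_pow_add_one]
  have hc0 : c ≠ 0 := by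
    rintro rfl
    exact hc (by rw [norm_zero]; positivity)
  have hct : c * ((p : ℚ_[p]) * c)⁻¹ = (p : ℚ_[p])⁻¹ := by field_simp
  apply psi_inv_p_ne_one ψ hψtriv hψnontriv
  rw [← hct]
  apply h
  · rw [norm_inv, norm_mul, Padic.norm_p]
    calc ((p : ℝ)⁻¹ * ‖c‖)⁻¹ ≤ ((p : ℝ) ^ (-E))⁻¹ := by
          refine inv_anti₀ (by positivity) ?_
          calc (p : ℝ) ^ (-E) = (p : ℝ)⁻¹ * (p : ℝ) ^ (-E + 1) := by
                rw [zpow_add_one₀ hp.ne']; field_simp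
            _ ≤ (p : ℝ)⁻¹ * ‖c‖ := by gcongr
      _ = (p : ℝ) ^ E := by rw [_root_.zpow_neg, inv_inv]
  · rw [hct, norm_inv, Padic.norm_p, inv_inv]

end Character

def JmLattice (p n m : ℕ) [Fact p.Prime] : AddSubgroup (Matrix (Fin n) (Fin n) ℚ_[p]) where
  carrier := {M | ∀ i j, ‖M i j‖ ≤ (p : ℝ) ^ (-(m : ℤ) + 2 * m * ((j : ℤ) - i))}
  add_mem' {M N} hM hN i j :=
    (IsUltrametricDist.norm_add_le_max _ _).trans (max_le (hM i j) (hN i j))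
  zero_mem' _ _ := by rw [Matrix.zero_apply, norm_zero]; positivity
  neg_mem' {M} hM i j := by rw [Matrix.neg_apply, norm_neg]; exact hM i j

section Congruence

variable {p n m : ℕ} [Fact p.Prime]

theorem single_mem_JmLattice {i j : Fin n} {z : ℚ_[p]}
    (hz : ‖z‖ ≤ (p : ℝ) ^ (-(m : ℤ) + 2 * m * ((j : ℤ) - i))) : single i j z ∈ JmLattice p n m := by
  intro i' j'
  rw [single_apply]
  split_ifs with h
  · obtain ⟨rfl, rfl⟩ := h
    exact hz
  · rw [norm_zero]; positivity

theorem dmat_pow_val :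
    ((dmat p n) ^ m).val = diagonal fun i : Fin n => (p : ℚ_[p]) ^ (2 * (i : ℕ) * m) := by
  rw [Units.val_pow_eq_pow_val, dmat, GeneralLinearGroup.val_mkOfDetNeZero, diagonal_pow]
  congr 1
  ext i
  rw [Pi.pow_apply, ← pow_mul]

theorem dmat_pow_inv_val :
    ((dmat p n) ^ m)⁻¹.val = diagonal fun i : Fin n => ((p : ℚ_[p]) ^ (2 * (i : ℕ) * m))⁻¹ := by
  have hp0 : (p : ℚ_[p]) ≠ 0 := Nat.cast_ne_zero.mpr (Fact.out : p.Prime).ne_zero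
  rw [coe_units_inv, dmat_pow_val]
  refine inv_eq_left_inv ?_
  rw [diagonal_mul_diagonal, ← diagonal_one]
  congr 1
  ext i
  exact inv_mul_cancel₀ (pow_ne_zero _ hp0)

theorem mem_Jm_iff (g : GL (Fin n) ℚ_[p]) : g ∈ Jm p n m ↔ g.val - 1 ∈ JmLattice p n m := by
  have hp : (0 : ℝ) < p := Nat.cast_pos.mpr (Fact.out : p.Prime).pos
  have hp0 : (p : ℚ_[p]) ≠ 0 := Nat.cast_ne_zero.mpr (Fact.out : p.Prime).ne_zero
  set D := dmat p n ^ m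
  have hJ : g ∈ Jm p n m ↔ D⁻¹ * g * D ∈ Kcong p n m :=
    ⟨fun ⟨K, hK, hg⟩ => by rwa [hg, show D⁻¹ * (D * K * D⁻¹) * D = K by simp [mul_assoc]],
      fun h => ⟨_, h, by simp [D, mul_assoc]⟩⟩
  have hentry : ∀ i j : Fin n, (D⁻¹ * g * D).val i j - (1 : Matrix (Fin n) (Fin n) ℚ_[p]) i j =
      ((p : ℚ_[p]) ^ (2 * (i : ℕ) * m))⁻¹ * (g.val - 1) i j * (p : ℚ_[p]) ^ (2 * (j : ℕ) * m) := by
    intro i j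
    rw [Units.val_mul, Units.val_mul, dmat_pow_inv_val, dmat_pow_val, mul_diagonal, diagonal_mul,
      Matrix.sub_apply]
    rcases eq_or_ne i j with rfl | hij
    · rw [one_apply_eq]
      field_simp
    · rw [one_apply_ne hij, sub_zero, sub_zero]
  rw [hJ]
  refine forall₂_congr fun i j => ?_
  rw [hentry, norm_mul, norm_mul, norm_inv, Padic.norm_p_pow, Padic.norm_p_pow, ← _root_.zpow_neg,
    neg_neg, mul_comm _ ‖_‖, mul_assoc, ← zpow_add₀ hp.ne', ← le_div_iff₀ (by positivity),
    ← zpow_sub₀ hp.ne']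
  push_cast
  ring_nf

end Congruence

section Unitriangular

variable {R : Type*} [CommRing R] {n : ℕ}

def IsUnitriangular (M : Matrix (Fin n) (Fin n) R) : Prop :=
  ∀ i j, j ≤ i → M i j = (1 : Matrix (Fin n) (Fin n) R) i j

theorem isUnitriangular_one : IsUnitriangular (1 : Matrix (Fin n) (Fin n) R) :=
  fun _ _ _ => rfl

theorem IsUnitriangular.add_single {M : Matrix (Fin n) (Fin n) R} (hM : IsUnitriangular M)
    {r c : Fin n} (hrc : r < c) (t : R) : IsUnitriangular (M + single r c t) := by
  intro i j hji
  rw [Matrix.add_apply, hM i j hji, single_apply, if_neg, add_zero]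
  rintro ⟨rfl, rfl⟩
  exact hji.not_gt hrc

theorem IsUnitriangular.det_eq_one {M : Matrix (Fin n) (Fin n) R} (hM : IsUnitriangular M) :
    M.det = 1 := by
  rw [det_of_isUpperTriangular fun i j hji => (hM i j hji.le).trans (one_apply_ne hji.ne')]
  exact Finset.prod_eq_one fun i _ => (hM i i le_rfl).trans (one_apply_eq i)

end Unitriangular

def IsUnitriangular.toGL {p n : ℕ} [Fact p.Prime] {M : Matrix (Fin n) (Fin n) ℚ_[p]}
    (hM : IsUnitriangular M) : GL (Fin n) ℚ_[p] :=
  GeneralLinearGroup.mkOfDetNeZero M (by rw [hM.det_eq_one]; exact one_ne_zero)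

theorem IsUnitriangular.toGL_mem_NN {p n : ℕ} [Fact p.Prime] {M : Matrix (Fin n) (Fin n) ℚ_[p]}
    (hM : IsUnitriangular M) : hM.toGL ∈ NN p n :=
  ⟨fun i => (hM i i le_rfl).trans (one_apply_eq i),
    fun i j hji => (hM i j hji.le).trans (one_apply_ne hji.ne')⟩

section YCoordinates

variable {p : ℕ} [Fact p.Prime] {n k : ℕ}

theorem isUnitriangular_yMat (v : Yidx n k → ℚ_[p]) : IsUnitriangular (yMat p v) := by
  intro i j hji
  rw [yMat, Matrix.add_apply, Matrix.sum_apply, Finset.sum_eq_zero, add_zero]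
  intro s _
  rw [single_apply, if_neg]
  rintro ⟨rfl, rfl⟩
  exact hji.not_gt s.prop.1

theorem yMat_add_single (v : Yidx n k → ℚ_[p]) (s : Yidx n k) (t : ℚ_[p]) :
    yMat p (v + Pi.single s t) = yMat p v + single s.val.1 s.val.2 t := by
  simp only [yMat, Pi.add_apply, single_add, Finset.sum_add_distrib, add_assoc]
  congr 2
  rw [Finset.sum_eq_single s (fun s' _ hs' => by rw [Pi.single_eq_of_ne hs', single_zero])
    (fun h => absurd (Finset.mem_univ s) h), Pi.single_eq_same]

theorem yMat_mul_one_add_single (v : Yidx n k → ℚ_[p]) {s : Yidx n k} (hs : (s.val.1 : ℕ) < k)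
    (t : ℚ_[p]) : yMat p v * (1 + single s.val.1 s.val.2 t) = yMat p (v + Pi.single s t) := by
  rw [yMat_add_single, mul_add, mul_one]
  congr 1
  rw [yMat, add_mul, one_mul, Finset.sum_mul, Finset.sum_eq_zero, add_zero]
  intro s' _
  refine single_mul_single_of_ne _ _ _ _ (fun h => ?_) _
  have := s'.prop.2
  rw [h] at this
  omega

theorem superSum_add (A B : Matrix (Fin n) (Fin n) ℚ_[p]) :
    superSum (A + B) = superSum A + superSum B := by
  simp only [superSum, ← Finset.sum_add_distrib]
  refine Finset.sum_congr rfl fun i _ => ?_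
  split_ifs <;> simp

theorem superSum_one : superSum (1 : Matrix (Fin n) (Fin n) ℚ_[p]) = 0 := by
  refine Finset.sum_eq_zero fun i _ => ?_
  split_ifs
  · exact one_apply_ne (by simp [Fin.ext_iff])
  · rfl

theorem superSum_single_of_val_eq_succ {r c : Fin n} (hrc : (c : ℕ) = r + 1) (t : ℚ_[p]) :
    superSum (single r c t) = t := by
  have hc : c = ⟨(r : ℕ) + 1, hrc ▸ c.isLt⟩ := Fin.ext hrc
  rw [superSum, Finset.sum_eq_single r]
  · rw [dif_pos (hrc ▸ c.isLt), ← hc, single_apply_same]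
  · intro i _ hi
    split_ifs <;> simp [Ne.symm hi]
  · exact fun h => absurd (Finset.mem_univ r) h

end YCoordinates

theorem eq_one_of_integral_add_right_eq_mul {G : Type*} [MeasurableSpace G] [AddGroup G]
    [MeasurableAdd G] {μ : Measure G} [μ.IsAddRightInvariant] {F : G → ℂ} {g : G} {c : ℂ}
    (hF : ∀ v, F (v + g) = c * F v) (hne : ∫ v, F v ∂μ ≠ 0) : c = 1 := by
  have h := integral_add_right_eq_self (μ := μ) F g
  simp only [hF, integral_const_mul] at h
  exact mul_right_cancel₀ hne (h.trans (one_mul _).symm)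

section Integrand

variable {p n k m : ℕ} [Fact p.Prime] (ψ : AddChar ℚ_[p] ℂ)
  (W : Matrix (Fin n) (Fin n) ℚ_[p] → ℂ)

def yIntegrand (g₀ H : GL (Fin n) ℚ_[p]) (v : Yidx n k → ℚ_[p]) : ℂ :=
  W (g₀.val * H.val⁻¹ * yMat p v * H.val) * (ψ (superSum (yMat p v)))⁻¹

theorem one_mem_BBbar_inter_Jm : (1 : GL (Fin n) ℚ_[p]) ∈ BBbar p n ∩ Jm p n m :=
  ⟨fun _ _ hij => one_apply_ne hij.ne,
    (mem_Jm_iff 1).mpr (by rw [Units.val_one, sub_self]; exact zero_mem _)⟩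

variable {ψ W}

theorem yIntegrand_add_single
    (hW : ∀ g : GL (Fin n) ℚ_[p], ∀ b ∈ BBbar p n ∩ Jm p n m, ∀ u ∈ NN p n ∩ Jm p n m,
      W (g.val * (b * u).val) = ψ (superSum u.val) * W g.val)
    (g₀ H : GL (Fin n) ℚ_[p]) {s : Yidx n k} (hs : (s.val.1 : ℕ) < k) (t : ℚ_[p])
    {C : GL (Fin n) ℚ_[p]} (hC : C ∈ NN p n ∩ Jm p n m)
    (hCH : C.val = H.val⁻¹ * (1 + single s.val.1 s.val.2 t) * H.val) (v : Yidx n k → ℚ_[p]) :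
    yIntegrand ψ W g₀ H (v + Pi.single s t) =
      ψ (superSum C.val - superSum (single s.val.1 s.val.2 t)) * yIntegrand ψ W g₀ H v := by
  set g := g₀ * H⁻¹ * (isUnitriangular_yMat v).toGL * H
  have hg : g.val = g₀.val * H.val⁻¹ * yMat p v * H.val := by
    simp [g, coe_units_inv, IsUnitriangular.toGL]
  have hgC : g.val * C.val = g₀.val * H.val⁻¹ * yMat p (v + Pi.single s t) * H.val := by
    rw [hg, hCH, ← yMat_mul_one_add_single v hs, ← coe_units_inv]
    simp only [mul_assoc, Units.mul_inv_cancel_left]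
  have hWC := hW g 1 one_mem_BBbar_inter_Jm C hC
  rw [one_mul, hgC] at hWC
  rw [yIntegrand, yIntegrand, hWC, hg, yMat_add_single, superSum_add, AddChar.map_add_eq_mul,
    AddChar.map_sub_eq_div]
  have := (ψ.val_isUnit (superSum (single s.val.1 s.val.2 t))).ne_zero
  field_simp

theorem psi_superSum_sub_eq_one_of_integral_ne_zero
    (hW : ∀ g : GL (Fin n) ℚ_[p], ∀ b ∈ BBbar p n ∩ Jm p n m, ∀ u ∈ NN p n ∩ Jm p n m,
      W (g.val * (b * u).val) = ψ (superSum u.val) * W g.val)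
    (μ : Measure ℚ_[p]) [SigmaFinite μ] [μ.IsAddRightInvariant] (g₀ H : GL (Fin n) ℚ_[p])
    (hne : ∫ v, yIntegrand ψ W g₀ H v ∂Measure.pi (fun _ : Yidx n k => μ) ≠ 0)
    {s : Yidx n k} (hs : (s.val.1 : ℕ) < k) (t : ℚ_[p])
    {C : GL (Fin n) ℚ_[p]} (hC : C ∈ NN p n ∩ Jm p n m)
    (hCH : C.val = H.val⁻¹ * (1 + single s.val.1 s.val.2 t) * H.val) :
    ψ (superSum C.val - superSum (single s.val.1 s.val.2 t)) = 1 :=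
  eq_one_of_integral_add_right_eq_mul (yIntegrand_add_single hW g₀ H hs t hC hCH) hne

end Integrand

section RowOperation

variable {R : Type*} [CommRing R] {ι : Type*} [Fintype ι] [DecidableEq ι]

theorem row_eq_one_of_mul_eq_one {G H : Matrix ι ι R} (hHG : H * G = 1) {i : ι}
    (hi : ∀ j, H i j = (1 : Matrix ι ι R) i j) (j : ι) : G i j = (1 : Matrix ι ι R) i j := by
  have h : (H * G) i j = ((1 : Matrix ι ι R) * G) i j := by simp only [mul_apply, hi]
  rwa [hHG, Matrix.one_mul, eq_comm] at h

theorem mul_apply_of_rows_eq_one {G H : Matrix ι ι R} {κ : ι}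
    (hH : ∀ i ≠ κ, ∀ j, H i j = (1 : Matrix ι ι R) i j) (i j : ι) :
    (G * H) i j = G i j + G i κ * (H κ j - (1 : Matrix ι ι R) κ j) := by
  have hH' : ∀ l, H l j =
      (1 : Matrix ι ι R) l j + if l = κ then H κ j - (1 : Matrix ι ι R) κ j else 0 := by
    intro l
    split_ifs with h
    · rw [h]; ring
    · rw [hH l h, add_zero]
  rw [mul_apply, Finset.sum_congr rfl fun l _ => by rw [hH' l]]
  simp [mul_add, Finset.sum_add_distrib, one_apply]

theorem mul_one_add_single_mul {G H : Matrix ι ι R} (hGH : G * H = 1) {κ κ' : ι}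
    (hH : ∀ j, H κ' j = (1 : Matrix ι ι R) κ' j)
    (hG : ∀ i ≠ κ, ∀ j, G i j = (1 : Matrix ι ι R) i j) (r : ι) (t : R) :
    G * (1 + single r κ' t) * H =
      1 + single r κ' t + single κ κ' ((G κ r - (1 : Matrix ι ι R) κ r) * t) := by
  have hEH : single r κ' t * H = single r κ' t := by
    ext i j
    rcases eq_or_ne i r with rfl | hi
    · rw [single_mul_apply_same, hH]
      simp [single_apply, one_apply]
    · rw [single_mul_apply_of_ne _ _ _ _ _ hi, single_apply, if_neg (fun h => hi h.1.symm)]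
  have hGE : G * single r κ' t =
      single r κ' t + single κ κ' ((G κ r - (1 : Matrix ι ι R) κ r) * t) := by
    ext i j
    rcases eq_or_ne j κ' with rfl | hj
    · rw [mul_single_apply_same, Matrix.add_apply]
      rcases eq_or_ne i κ with rfl | hi
      · by_cases h : i = r
        · subst h; simp only [single_apply_same, one_apply_eq]; ring
        · simp [one_apply, h, Ne.symm h]
      · rw [hG i hi]
        simp [single_apply, one_apply, Ne.symm hi, eq_comm]
    · rw [mul_single_apply_of_ne _ _ _ _ _ hj, Matrix.add_apply, single_apply, single_apply,
        if_neg (fun h => hj h.2.symm), if_neg (fun h => hj h.2.symm), add_zero]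
  rw [mul_add, mul_one, add_mul, hGH, mul_assoc, hEH, hGE, add_assoc]

end RowOperation

section RowPerturbation

variable {R : Type*} [Field R] {ι ν : Type*} [DecidableEq ι] [Fintype ν]

def rowPerturbation (κ : ι) (col : ν → ι) (a : R) (x : ν → R) : Matrix ι ι R :=
  1 + single κ κ (a - 1) + ∑ l, single κ (col l) (x l)

variable {κ : ι} {col : ν → ι} {a : R} {x : ν → R}

theorem rowPerturbation_apply_of_ne {i : ι} (hi : i ≠ κ) (j : ι) :
    rowPerturbation κ col a x i j = (1 : Matrix ι ι R) i j := by
  simp [rowPerturbation, Matrix.sum_apply, Ne.symm hi]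

theorem rowPerturbation_apply_row (j : ι) :
    rowPerturbation κ col a x κ j = (1 : Matrix ι ι R) κ j + (if κ = j then a - 1 else 0) +
      ∑ l, if col l = j then x l else 0 := by
  simp [rowPerturbation, Matrix.sum_apply, single_apply]

theorem rowPerturbation_apply_self (hcol : ∀ l, col l ≠ κ) :
    rowPerturbation κ col a x κ κ = a := by
  simp [rowPerturbation_apply_row, hcol]

theorem rowPerturbation_apply_col (hcol : ∀ l, col l ≠ κ) (hinj : col.Injective) (l : ν) :
    rowPerturbation κ col a x κ (col l) = x l := by
  rw [rowPerturbation_apply_row, one_apply_ne (hcol l).symm, if_neg (hcol l).symm, zero_add,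
    zero_add, Finset.sum_eq_single l (fun l' _ hl' => if_neg (hinj.ne hl')) (by simp), if_pos rfl]

theorem det_rowPerturbation {n : ℕ} {κ : Fin n} {col : ν → Fin n} (hcol : ∀ l, col l < κ) :
    (rowPerturbation κ col a x).det = a := by
  rw [det_of_isLowerTriangular]
  · rw [Finset.prod_eq_single κ (fun i _ hi => by rw [rowPerturbation_apply_of_ne hi, one_apply_eq])
      (fun h => absurd (Finset.mem_univ κ) h), rowPerturbation_apply_self fun l => (hcol l).ne]
  · intro i j hij
    replace hij : i < j := OrderDual.toDual_lt_toDual.mp hij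
    rcases eq_or_ne i κ with rfl | hi
    · rw [rowPerturbation_apply_row, one_apply_ne hij.ne, if_neg hij.ne, zero_add, zero_add]
      exact Finset.sum_eq_zero fun l _ => if_neg ((hcol l).trans hij).ne
    · rw [rowPerturbation_apply_of_ne hi, one_apply_ne hij.ne]

theorem inv_row_of_mul_rowPerturbation_eq_one [Fintype ι] {G : Matrix ι ι R}
    (hG : G * rowPerturbation κ col a x = 1) (hcol : ∀ l, col l ≠ κ) (hinj : col.Injective) :
    G κ κ = a⁻¹ ∧ ∀ l, G κ (col l) = -(a⁻¹ * x l) := by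
  have hrow := mul_apply_of_rows_eq_one (G := G) (H := rowPerturbation κ col a x) (κ := κ)
    (fun _ hi => rowPerturbation_apply_of_ne hi) κ
  have hκ := hrow κ
  rw [hG, rowPerturbation_apply_self hcol, one_apply_eq] at hκ
  have hGκ : G κ κ = a⁻¹ := eq_inv_of_mul_eq_one_left (by rw [hκ]; ring)
  refine ⟨hGκ, fun l => ?_⟩
  have hl := hrow (col l)
  rw [hG, rowPerturbation_apply_col hcol hinj, one_apply_ne (hcol l).symm, hGκ] at hl
  linear_combination -hl

end RowPerturbation

theorem norm_eq_one_and_norm_sub_one_le_of_norm_inv_sub_one_le {K : Type*} [NormedField K]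
    [IsUltrametricDist K] {a : K} {ε : ℝ} (hε : ε < 1) (h : ‖a⁻¹ - 1‖ ≤ ε) :
    ‖a‖ = 1 ∧ ‖a - 1‖ ≤ ε := by
  have hinv : ‖a⁻¹‖ = 1 := by
    rw [← sub_add_cancel a⁻¹ 1, IsUltrametricDist.norm_add_eq_max_of_norm_ne_norm, norm_one,
      max_eq_right (h.trans hε.le)]
    rw [norm_one]; exact (h.trans_lt hε).ne
  have ha : ‖a‖ = 1 := by rwa [norm_inv, inv_eq_one] at hinv
  have ha0 : a ≠ 0 := norm_ne_zero_iff.mp (by rw [ha]; exact one_ne_zero)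
  refine ⟨ha, ?_⟩
  rw [show a - 1 = -(a * (a⁻¹ - 1)) by field_simp; ring, norm_neg, norm_mul, ha, one_mul]
  exact h

section KeyEstimate

variable {p n k m : ℕ} [Fact p.Prime] {ψ : AddChar ℚ_[p] ℂ}
  {W : Matrix (Fin n) (Fin n) ℚ_[p] → ℂ}

theorem norm_inv_apply_sub_one_le (hψtriv : ∀ y : ℚ_[p], ‖y‖ ≤ 1 → ψ y = 1)
    (hψnontriv : ∃ y : ℚ_[p], ‖y‖ ≤ (p : ℝ) ∧ ψ y ≠ 1) (hm : 1 ≤ m)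
    (hW : ∀ g : GL (Fin n) ℚ_[p], ∀ b ∈ BBbar p n ∩ Jm p n m, ∀ u ∈ NN p n ∩ Jm p n m,
      W (g.val * (b * u).val) = ψ (superSum u.val) * W g.val)
    (μ : Measure ℚ_[p]) [SigmaFinite μ] [μ.IsAddRightInvariant] (g₀ H : GL (Fin n) ℚ_[p])
    (hne : ∫ v, yIntegrand ψ W g₀ H v ∂Measure.pi (fun _ : Yidx n k => μ) ≠ 0)
    (hk : k < n) {κ : Fin n} (hκ : (κ : ℕ) + 1 = k)
    (hH : ∀ i ≠ κ, ∀ j, H.val i j = (1 : Matrix (Fin n) (Fin n) ℚ_[p]) i j)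
    {r : Fin n} (hr : r ≤ κ) :
    ‖H.val⁻¹ κ r - (1 : Matrix (Fin n) (Fin n) ℚ_[p]) κ r‖ ≤
      (p : ℝ) ^ (-(m : ℤ) + 2 * m * ((r : ℤ) - κ)) := by
  have hp : (1 : ℝ) ≤ p := Nat.one_le_cast.mpr (Fact.out : p.Prime).one_lt.le
  have hGH : H.val⁻¹ * H.val = 1 := by rw [← coe_units_inv, H.inv_mul]
  have hG : ∀ i ≠ κ, ∀ j, H.val⁻¹ i j = (1 : Matrix (Fin n) (Fin n) ℚ_[p]) i j := fun i hi =>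
    row_eq_one_of_mul_eq_one (by rw [← coe_units_inv, H.mul_inv]) (hH i hi)
  set c := H.val⁻¹ κ r - (1 : Matrix (Fin n) (Fin n) ℚ_[p]) κ r
  let κ' : Fin n := ⟨k, hk⟩
  have hκ'k : (κ' : ℕ) = k := rfl
  have hκ' : (κ' : ℤ) = κ + 1 := by omega
  have hrκ' : r < κ' := Fin.lt_def.mpr (by rw [Fin.le_def] at hr; omega)
  have hκκ' : κ < κ' := Fin.lt_def.mpr (by omega)
  rw [show -(m : ℤ) + 2 * m * ((r : ℤ) - κ) = -(-(m : ℤ) + 2 * m * ((κ' : ℤ) - r)) by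
    rw [hκ']; ring]
  refine norm_le_of_forall_psi_mul_eq_one ψ hψtriv hψnontriv fun t ht hct => ?_
  have hC := (isUnitriangular_one.add_single hrκ' t).add_single hκκ' (c * t)
  have hCH : hC.toGL.val = H.val⁻¹ * (1 + single r κ' t) * H.val :=
    (mul_one_add_single_mul hGH (hH κ' hκκ'.ne') hG r t).symm
  have hCJ : hC.toGL ∈ Jm p n m := by
    rw [mem_Jm_iff]
    show 1 + single r κ' t + single κ κ' (c * t) - 1 ∈ _
    rw [add_assoc, add_sub_cancel_left]
    refine add_mem (single_mem_JmLattice ht) (single_mem_JmLattice ?_)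
    calc ‖c * t‖ ≤ (p : ℝ) ^ (1 : ℤ) := by rwa [zpow_one]
      _ ≤ _ := zpow_le_zpow_right₀ hp (by rw [hκ']; omega)
  have := psi_superSum_sub_eq_one_of_integral_ne_zero hW μ g₀ H hne
    (s := ⟨(r, κ'), hrκ', le_rfl⟩) (by omega) t ⟨hC.toGL_mem_NN, hCJ⟩ hCH
  rwa [show hC.toGL.val = 1 + single r κ' t + single κ κ' (c * t) from rfl, superSum_add,
    superSum_add, superSum_one, zero_add, add_sub_cancel_left,
    superSum_single_of_val_eq_succ (by omega)] at this

end KeyEstimate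

section RowPerturbationBounds

variable {p n m : ℕ} [Fact p.Prime] {ν : Type*} [Fintype ν] {κ : Fin n} {col : ν → Fin n}
  {a : ℚ_[p]} {x : ν → ℚ_[p]}

theorem rowPerturbation_sub_one_mem_JmLattice (ha : ‖a - 1‖ ≤ (p : ℝ) ^ (-(m : ℤ)))
    (hx : ∀ l, ‖x l‖ ≤ (p : ℝ) ^ (-(m : ℤ) + 2 * m * ((col l : ℤ) - κ))) :
    rowPerturbation κ col a x - 1 ∈ JmLattice p n m := by
  rw [rowPerturbation, add_assoc, add_sub_cancel_left]
  exact add_mem (single_mem_JmLattice (by simpa using ha))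
    (sum_mem fun l _ => single_mem_JmLattice (hx l))

theorem norm_bounds_of_inv_rowPerturbation (hm : 1 ≤ m) (hcol : ∀ l, col l < κ)
    (hinj : col.Injective) (ha : a ≠ 0)
    (hrow : ∀ r ≤ κ, ‖(rowPerturbation κ col a x)⁻¹ κ r - (1 : Matrix (Fin n) (Fin n) ℚ_[p]) κ r‖ ≤
      (p : ℝ) ^ (-(m : ℤ) + 2 * m * ((r : ℤ) - κ))) :
    ‖a - 1‖ ≤ (p : ℝ) ^ (-(m : ℤ)) ∧
      ∀ l, ‖x l‖ ≤ (p : ℝ) ^ (-(m : ℤ) + 2 * m * ((col l : ℤ) - κ)) := by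
  have hdet : IsUnit (rowPerturbation κ col a x).det := by
    rw [det_rowPerturbation hcol]; exact ha.isUnit
  obtain ⟨hinvκ, hinvcol⟩ := inv_row_of_mul_rowPerturbation_eq_one (nonsing_inv_mul _ hdet)
    (fun l => (hcol l).ne) hinj
  have haκ := hrow κ le_rfl
  rw [hinvκ, one_apply_eq, sub_self, mul_zero, add_zero] at haκ
  obtain ⟨ha1, haε⟩ := norm_eq_one_and_norm_sub_one_le_of_norm_inv_sub_one_le
    (zpow_lt_one_of_neg₀ (Nat.one_lt_cast.mpr (Fact.out : p.Prime).one_lt) (by omega)) haκ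
  refine ⟨haε, fun l => ?_⟩
  have hl := hrow (col l) (hcol l).le
  rwa [hinvcol, one_apply_ne (hcol l).ne', sub_zero, norm_neg, norm_mul, norm_inv, ha1, inv_one,
    one_mul] at hl

end RowPerturbationBounds

/-- If `W` transforms on the right under `(J_m, ψ_m)` and, for
`h = I + (a-1)e_{k,k} + Σ_{i=1}^{k-1} x_i e_{k,i}` (one-based indices, `a ≠ 0`), the integral
`∫_Y W(g₀ h⁻¹ y h) ψ(y)⁻¹ dy` (over the group `Y` in coordinates, with product Haar measure)
converges and is nonzero, then `h ∈ J_m`: `x_i ∈ p^{(1+2(k-i))m} ℤ_p` for all `i` and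
`a ∈ 1 + p^m ℤ_p`. -/
theorem statement10 (p n k m : ℕ) [Fact p.Prime]
    (hk1 : 2 ≤ k) (hk2 : k ≤ n - 1) (hm : 1 ≤ m)
    (a : ℚ_[p]) (ha : a ≠ 0) (x : Fin (k - 1) → ℚ_[p])
    (ψ : AddChar ℚ_[p] ℂ)
    (hψtriv : ∀ y : ℚ_[p], ‖y‖ ≤ 1 → ψ y = 1)
    (hψnontriv : ∃ y : ℚ_[p], ‖y‖ ≤ (p : ℝ) ∧ ψ y ≠ 1)
    (μ : MeasureTheory.Measure ℚ_[p]) [μ.IsAddHaarMeasure]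
    (W : Matrix (Fin n) (Fin n) ℚ_[p] → ℂ)
    (hW : ∀ g : GL (Fin n) ℚ_[p],
      ∀ b ∈ BBbar p n ∩ Jm p n m, ∀ u ∈ NN p n ∩ Jm p n m,
        W (g.val * (b * u).val) = ψ (superSum u.val) * W g.val)
    (g₀ : GL (Fin n) ℚ_[p]) :
    letI hMat : Matrix (Fin n) (Fin n) ℚ_[p] :=
      1 + Matrix.single ⟨k - 1, by omega⟩ ⟨k - 1, by omega⟩ (a - 1) +
        ∑ i : Fin (k - 1),
          Matrix.single ⟨k - 1, by omega⟩ (Fin.castLE (by omega) i) (x i)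
    MeasureTheory.Integrable
      (fun v : Yidx n k → ℚ_[p] =>
        W (g₀.val * hMat⁻¹ * yMat p v * hMat) * (ψ (superSum (yMat p v)))⁻¹)
      (MeasureTheory.Measure.pi fun _ => μ) →
    (∫ v : Yidx n k → ℚ_[p],
        W (g₀.val * hMat⁻¹ * yMat p v * hMat) * (ψ (superSum (yMat p v)))⁻¹
        ∂(MeasureTheory.Measure.pi fun _ => μ)) ≠ 0 →
    (∀ i : Fin (k - 1),
        ‖x i‖ ≤ (p : ℝ) ^ (-((1 + 2 * ((k : ℤ) - ((i : ℕ) + 1))) * (m : ℤ)))) ∧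
      ‖a - 1‖ ≤ (p : ℝ) ^ (-(m : ℤ)) ∧
      ∃ hGL ∈ Jm p n m, hGL.val = hMat := by
  intro _ hne
  set κ : Fin n := ⟨k - 1, by omega⟩
  set col : Fin (k - 1) → Fin n := Fin.castLE (by omega)
  have hcol : ∀ l, col l < κ := fun l => l.isLt
  let H := GeneralLinearGroup.mkOfDetNeZero (rowPerturbation κ col a x)
    (by rw [det_rowPerturbation hcol]; exact ha)
  obtain ⟨haε, hx⟩ := norm_bounds_of_inv_rowPerturbation hm hcol (Fin.castLE_injective _) ha
    fun r hr => norm_inv_apply_sub_one_le hψtriv hψnontriv hm hW μ g₀ H hne (by omega)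
      (by show k - 1 + 1 = k; omega) (fun _ hi => rowPerturbation_apply_of_ne hi) hr
  refine ⟨fun l => (hx l).trans_eq ?_, haε, H,
    (mem_Jm_iff H).mpr (rowPerturbation_sub_one_mem_JmLattice haε hx), rfl⟩
  simp only [κ, col, Fin.val_castLE]
  push_cast [Nat.cast_sub (by omega : 1 ≤ k)]
  ring_nf
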